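/- With X^Λ as above and k(Λ) ≥ Λ²(Λ+1)², the largest eigenvalue α₁(Λ) of X^Λ satisfies α₁(Λ) ≥ 1 − π²/(8(Λ+1)²) for all Λ ∈ ℕ, and α₁(Λ) → 1 as Λ → ∞. -/

import Mathlib

/-- `b_m = √(1 + m(m-1)/k)`. -/
noncomputable def bcoef (k : ℝ) (m : ℤ) : ℝ := Real.sqrt (1 + (m * (m - 1)) / k)

/-- The matrix of the coordinate `x₁` on the fuzzy circle `S¹_Λ`. -/
noncomputable def XLam (Λ : ℕ) (k : ℝ) : Matrix (Fin (2*Λ+1)) (Fin (2*Λ+1)) ℝ :=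
  fun i j =>
    if (i : ℕ) + 1 = j then bcoef k ((Λ : ℤ) - (i : ℕ)) / 2
    else if (j : ℕ) + 1 = i then bcoef k ((Λ : ℤ) - (j : ℕ)) / 2
    else 0

/-!
The sine vector `w_j = sin ((j + 1) π / (2Λ + 2))` is the ground state of the chain with all
`b_m = 1`. Since `b_m ≥ 1` and `w ≥ 0`, it satisfies `X^Λ w ≥ cos (π / (2Λ + 2)) • w`
entrywise, so the Rayleigh principle gives `α₁ ≥ cos (π / (2Λ + 2)) ≥ 1 - π² / (8 (Λ + 1)²)`.
Conversely `k ≥ Λ² (Λ + 1)²` forces `b_m ≤ 1 + 1/Λ` for `|m| ≤ Λ`, so every row sum of the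
nonnegative matrix `X^Λ` is at most `1 + 1/Λ`, which bounds `α₁` by Gershgorin's theorem.
-/

open Matrix Real

namespace Matrix

variable {n : Type*} [Fintype n] [DecidableEq n]

theorem IsHermitian.dotProduct_mulVec_le {A : Matrix n n ℝ} (hA : A.IsHermitian) {α : ℝ}
    (hα : ∀ μ ∈ spectrum ℝ A, μ ≤ α) (v : n → ℝ) : v ⬝ᵥ A *ᵥ v ≤ α * (v ⬝ᵥ v) := by
  have hpsd : (algebraMap ℝ (Matrix n n ℝ) α - A).PosSemidef := by
    refine posSemidef_iff_isHermitian_and_spectrum_nonneg.2 ⟨?_, ?_⟩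
    · exact (isHermitian_diagonal _).sub hA
    · rw [← spectrum.singleton_sub_eq]
      rintro _ ⟨_, rfl, μ, hμ, rfl⟩
      exact sub_nonneg.2 (hα μ hμ)
  have := hpsd.dotProduct_mulVec_nonneg v
  simp only [star_trivial, sub_mulVec, dotProduct_sub, algebraMap_eq_diagonal] at this
  simpa [mulVec_diagonal, dotProduct, Finset.mul_sum, mul_left_comm] using this

theorem IsHermitian.le_of_smul_le_mulVec {A : Matrix n n ℝ} (hA : A.IsHermitian) {α : ℝ}
    (hα : ∀ μ, Module.End.HasEigenvalue (toLin' A) μ → μ ≤ α) {w : n → ℝ} (hw : 0 ≤ w)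
    (hw₀ : w ≠ 0) {c : ℝ} (hc : c • w ≤ A *ᵥ w) : c ≤ α := by
  have hpos : 0 < w ⬝ᵥ w := by
    simpa using dotProduct_star_self_pos_iff.2 hw₀
  have hspec : ∀ μ ∈ spectrum ℝ A, μ ≤ α := fun μ hμ =>
    hα μ (Module.End.hasEigenvalue_iff_mem_spectrum.2 ((spectrum_toLin' A).symm ▸ hμ))
  refine le_of_mul_le_mul_right ?_ hpos
  calc c * (w ⬝ᵥ w) = w ⬝ᵥ c • w := by rw [dotProduct_smul, smul_eq_mul]
    _ ≤ w ⬝ᵥ A *ᵥ w := dotProduct_le_dotProduct_of_nonneg_left hc hw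
    _ ≤ α * (w ⬝ᵥ w) := hA.dotProduct_mulVec_le hspec w

theorem le_of_hasEigenvalue_of_sum_le {A : Matrix n n ℝ} (hA : ∀ i j, 0 ≤ A i j) {c : ℝ}
    (hc : ∀ i, ∑ j, A i j ≤ c) {μ : ℝ} (hμ : Module.End.HasEigenvalue (toLin' A) μ) :
    μ ≤ c := by
  obtain ⟨i, hi⟩ := eigenvalue_mem_ball hμ
  rw [Metric.mem_closedBall, Real.dist_eq] at hi
  have hrow : A i i + ∑ j ∈ Finset.univ.erase i, ‖A i j‖ = ∑ j, A i j := by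
    simp only [Real.norm_of_nonneg (hA i _)]
    exact Finset.add_sum_erase _ _ (Finset.mem_univ i)
  linarith [le_abs_self (μ - A i i), hc i]

end Matrix

lemma one_le_bcoef {k : ℝ} (hk : 0 ≤ k) (m : ℤ) : 1 ≤ bcoef k m := by
  have hm : (0 : ℝ) ≤ m * (m - 1) := by
    have : (0 : ℤ) ≤ m * (m - 1) := by
      rcases le_or_gt m 0 with h | h
      · exact mul_nonneg_of_nonpos_of_nonpos h (by omega)
      · exact mul_nonneg h.le (by omega)
    exact_mod_cast this
  exact Real.one_le_sqrt.2 (le_add_of_nonneg_right (div_nonneg hm hk))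

lemma bcoef_le_one_add_inv {Λ : ℕ} (hΛ : 0 < Λ) {k : ℝ} (hk : (Λ : ℝ) ^ 2 * (Λ + 1) ^ 2 ≤ k)
    {m : ℤ} (hm₁ : -(Λ : ℤ) ≤ m) (hm₂ : m ≤ Λ) : bcoef k m ≤ 1 + 1 / Λ := by
  have hΛ' : (1 : ℝ) ≤ Λ := by exact_mod_cast hΛ
  have hm₁' : -(Λ : ℝ) ≤ m := by exact_mod_cast hm₁
  have hm₂' : (m : ℝ) ≤ Λ := by exact_mod_cast hm₂
  have hkpos : 0 < k := lt_of_lt_of_le (by positivity) hk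
  have hquot : (m * (m - 1)) / k ≤ 1 / Λ := by
    rw [div_le_div_iff₀ hkpos (by positivity)]
    have hnum : (m : ℝ) * (m - 1) ≤ Λ * (Λ + 1) := by nlinarith
    nlinarith [mul_le_mul_of_nonneg_left hnum (by positivity : (0 : ℝ) ≤ Λ)]
  have hinv : 0 ≤ 1 / (Λ : ℝ) := by positivity
  refine Real.sqrt_le_iff.2 ⟨by positivity, ?_⟩
  nlinarith

lemma XLam_isHermitian (Λ : ℕ) (k : ℝ) : (XLam Λ k).IsHermitian := by
  ext i j
  simp only [conjTranspose_apply, XLam, star_trivial]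
  split_ifs <;> first | rfl | omega

lemma XLam_nonneg (Λ : ℕ) (k : ℝ) (i j : Fin (2 * Λ + 1)) : 0 ≤ XLam Λ k i j := by
  unfold XLam bcoef
  split_ifs <;> positivity

/-- Vectors are written as `j ↦ s (j + 1)`, so that the vanishing of `s` at `0` and `2Λ + 2`
supplies the missing neighbours of the two boundary entries. -/
lemma XLam_mulVec_apply {Λ : ℕ} (k : ℝ) {s : ℕ → ℝ} (hs₀ : s 0 = 0) (hs : s (2 * Λ + 2) = 0)
    (i : Fin (2 * Λ + 1)) :
    (XLam Λ k *ᵥ fun j => s (j + 1)) i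
      = (bcoef k (Λ - i) * s (i + 2) + bcoef k (Λ - i + 1) * s i) / 2 := by
  set g : ℕ → ℝ := fun j =>
    (if (i : ℕ) + 1 = j then bcoef k ((Λ : ℤ) - (i : ℕ)) / 2
      else if j + 1 = i then bcoef k ((Λ : ℤ) - j) / 2 else 0) * s (j + 1)
  have hsum : (XLam Λ k *ᵥ fun j => s (j + 1)) i = ∑ j ∈ Finset.range (2 * Λ + 1), g j :=
    Fin.sum_univ_eq_sum_range g _
  rw [hsum, Finset.sum_eq_add ((i : ℕ) + 1) (i - 1) (by omega)]
  · have hup : g (i + 1) = bcoef k (Λ - i) / 2 * s (i + 2) := by simp [g]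
    have hdown : g (i - 1) = bcoef k (Λ - i + 1) / 2 * s i := by
      obtain ⟨_ | m, hm⟩ := i
      · simp [g, hs₀]
      · simp [g, show m + 1 + 1 ≠ m by omega, sub_add_eq_sub_sub, sub_add_cancel]
    rw [hup, hdown]
    ring
  · intro c _ hc
    simp only [g]
    rw [if_neg (Ne.symm hc.1), if_neg (by omega), zero_mul]
  · intro hi
    have : (i : ℕ) + 1 = 2 * Λ + 1 := by simp at hi; omega
    simp [g, this, hs]
  · exact fun hi => absurd (Finset.mem_range.2 (by omega)) hi

noncomputable def sineMode (Λ n : ℕ) : ℝ := sin (n * π / (2 * Λ + 2))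

lemma sineMode_zero (Λ : ℕ) : sineMode Λ 0 = 0 := by simp [sineMode]

lemma sineMode_two_mul_add_two (Λ : ℕ) : sineMode Λ (2 * Λ + 2) = 0 := by
  rw [sineMode, ← sin_pi]
  congr 1
  push_cast
  field_simp

lemma sineMode_nonneg {Λ n : ℕ} (hn : n ≤ 2 * Λ + 2) : 0 ≤ sineMode Λ n := by
  have hn' : (n : ℝ) ≤ 2 * Λ + 2 := by exact_mod_cast hn
  refine sin_nonneg_of_nonneg_of_le_pi (by positivity) ?_
  rw [div_le_iff₀ (by positivity)]
  nlinarith [pi_pos]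

lemma sineMode_one_pos (Λ : ℕ) : 0 < sineMode Λ 1 := by
  rw [sineMode, Nat.cast_one, one_mul]
  have hΛ : (0 : ℝ) ≤ Λ := Λ.cast_nonneg
  exact sin_pos_of_pos_of_lt_pi (by positivity) (div_lt_self pi_pos (by linarith))

lemma sineMode_add_sineMode_add_two (Λ n : ℕ) :
    sineMode Λ n + sineMode Λ (n + 2) = 2 * cos (π / (2 * Λ + 2)) * sineMode Λ (n + 1) := by
  set θ := π / (2 * Λ + 2)
  have h₀ : (n : ℝ) * π / (2 * Λ + 2) = (n + 1 : ℕ) * θ - θ := by push_cast; ring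
  have h₂ : ((n + 2 : ℕ) : ℝ) * π / (2 * Λ + 2) = (n + 1 : ℕ) * θ + θ := by push_cast; ring
  have h₁ : ((n + 1 : ℕ) : ℝ) * π / (2 * Λ + 2) = (n + 1 : ℕ) * θ := by ring
  rw [sineMode, sineMode, sineMode, h₀, h₁, h₂, sin_sub, sin_add]
  ring

lemma cos_smul_sineMode_le_XLam_mulVec {Λ : ℕ} {k : ℝ} (hk : 0 ≤ k) :
    cos (π / (2 * Λ + 2)) • (fun j : Fin (2 * Λ + 1) => sineMode Λ (j + 1))
      ≤ XLam Λ k *ᵥ fun j => sineMode Λ (j + 1) := by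
  intro i
  rw [XLam_mulVec_apply k (sineMode_zero Λ) (sineMode_two_mul_add_two Λ), Pi.smul_apply,
    smul_eq_mul]
  have hrec := sineMode_add_sineMode_add_two Λ i
  have hs₀ := sineMode_nonneg (Λ := Λ) (n := i) (by omega)
  have hs₂ := sineMode_nonneg (Λ := Λ) (n := i + 2) (by omega)
  nlinarith [mul_le_mul_of_nonneg_right (one_le_bcoef hk (Λ - i)) hs₂,
    mul_le_mul_of_nonneg_right (one_le_bcoef hk (Λ - i + 1)) hs₀]

lemma cos_le_of_isGreatest_XLam {Λ : ℕ} {k : ℝ} (hk : 0 ≤ k) {α : ℝ}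
    (hα : IsGreatest {α : ℝ | Module.End.HasEigenvalue (toLin' (XLam Λ k)) α} α) :
    cos (π / (2 * Λ + 2)) ≤ α := by
  refine (XLam_isHermitian Λ k).le_of_smul_le_mulVec (fun μ hμ => hα.2 hμ) ?_ ?_
    (cos_smul_sineMode_le_XLam_mulVec hk)
  · exact fun j => sineMode_nonneg (by omega)
  · exact fun h => (sineMode_one_pos Λ).ne' (congrFun h ⟨0, by omega⟩)

lemma sum_XLam_le {Λ : ℕ} (hΛ : 0 < Λ) {k : ℝ} (hk : (Λ : ℝ) ^ 2 * (Λ + 1) ^ 2 ≤ k)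
    (i : Fin (2 * Λ + 1)) : ∑ j, XLam Λ k i j ≤ 1 + 1 / Λ := by
  set s : ℕ → ℝ := fun n => if 0 < n ∧ n < 2 * Λ + 2 then 1 else 0
  have hrow : ∑ j, XLam Λ k i j = (XLam Λ k *ᵥ fun j => s (j + 1)) i := by
    simp only [mulVec, dotProduct, s]
    refine Finset.sum_congr rfl fun j _ => ?_
    rw [if_pos ⟨j.1.succ_pos, by omega⟩, mul_one]
  have hterm : ∀ (m : ℤ) (n : ℕ), (0 < n ∧ n < 2 * Λ + 2 → -(Λ : ℤ) ≤ m ∧ m ≤ Λ) →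
      bcoef k m * s n ≤ 1 + 1 / Λ := by
    intro m n hmn
    simp only [s]
    split_ifs with h
    · rw [mul_one]
      exact bcoef_le_one_add_inv hΛ hk (hmn h).1 (hmn h).2
    · rw [mul_zero]
      positivity
  rw [hrow, XLam_mulVec_apply k (by simp [s]) (by simp [s])]
  linarith [hterm (Λ - i) (i + 2) (fun _ => by omega), hterm (Λ - i + 1) i (fun _ => by omega)]

lemma le_one_add_inv_of_hasEigenvalue_XLam {Λ : ℕ} (hΛ : 0 < Λ) {k : ℝ}
    (hk : (Λ : ℝ) ^ 2 * (Λ + 1) ^ 2 ≤ k) {μ : ℝ}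
    (hμ : Module.End.HasEigenvalue (toLin' (XLam Λ k)) μ) : μ ≤ 1 + 1 / Λ :=
  le_of_hasEigenvalue_of_sum_le (XLam_nonneg Λ k) (sum_XLam_le hΛ hk) hμ

theorem stmt_9 (k : ℕ → ℝ) (hk : ∀ Λ : ℕ, (Λ : ℝ)^2 * ((Λ : ℝ) + 1)^2 ≤ k Λ)
    (α₁ : ℕ → ℝ)
    (hα₁ : ∀ Λ : ℕ, 0 < Λ →
      IsGreatest {α : ℝ | Module.End.HasEigenvalue (Matrix.toLin' (XLam Λ (k Λ))) α} (α₁ Λ)) :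
    (∀ Λ : ℕ, 0 < Λ → 1 - Real.pi ^ 2 / (8 * ((Λ : ℝ) + 1) ^ 2) ≤ α₁ Λ) ∧
      Filter.Tendsto α₁ Filter.atTop (nhds 1) := by
  have lower : ∀ Λ : ℕ, 0 < Λ → 1 - π ^ 2 / (8 * ((Λ : ℝ) + 1) ^ 2) ≤ α₁ Λ := fun Λ hΛ =>
    calc 1 - π ^ 2 / (8 * ((Λ : ℝ) + 1) ^ 2) = 1 - (π / (2 * Λ + 2)) ^ 2 / 2 := by
          field_simp
          ring
      _ ≤ cos (π / (2 * Λ + 2)) := one_sub_sq_div_two_le_cos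
      _ ≤ α₁ Λ := cos_le_of_isGreatest_XLam (le_trans (by positivity) (hk Λ)) (hα₁ Λ hΛ)
  have upper : ∀ Λ : ℕ, 0 < Λ → α₁ Λ ≤ 1 + 1 / Λ := fun Λ hΛ =>
    le_one_add_inv_of_hasEigenvalue_XLam hΛ (hk Λ) (hα₁ Λ hΛ).1
  have hlower : Filter.Tendsto (fun Λ : ℕ => 1 - π ^ 2 / (8 * ((Λ : ℝ) + 1) ^ 2))
      Filter.atTop (nhds 1) := by
    have := ((tendsto_one_div_add_atTop_nhds_zero_nat.pow 2).const_mul (π ^ 2 / 8)).const_sub 1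
    rw [zero_pow two_ne_zero, mul_zero, sub_zero] at this
    refine this.congr fun Λ => ?_
    field_simp
  have hupper : Filter.Tendsto (fun Λ : ℕ => 1 + 1 / (Λ : ℝ)) Filter.atTop (nhds 1) := by
    simpa using tendsto_one_div_atTop_nhds_zero_nat.const_add (1 : ℝ)
  refine ⟨lower, tendsto_of_tendsto_of_tendsto_of_le_of_le' hlower hupper ?_ ?_⟩
  · filter_upwards [Filter.eventually_gt_atTop 0] with Λ hΛ using lower Λ hΛ
  · filter_upwards [Filter.eventually_gt_atTop 0] with Λ hΛ using upper Λ hΛ
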